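/- Fix p ∈ (1/2, 1) and q = 1 − p, and let μ be the product (blocking) measure on {0,1}^ℤ under which the coordinates ζ(i), i ∈ ℤ, are independent Bernoulli with μ(ζ(i) = 1) = (p/q)^i / (1 + (p/q)^i). For Z ∈ ℤ write μ_Z = μ(· | Ω_Z) and μ_Z(i) = μ_Z({ζ : ζ(i) = 1}). Then for all Z, k, i ∈ ℤ, μ_Z(i) = μ_{Z+k}(i + k). -/

import Mathlib

/-!
Every `ζ ∈ Ω_Z` differs from the ground state `η_Z = 𝟙[Z, ∞)` at finitely many sites, so `Ω_Z`
is countable and `μ` restricted to it is determined by point masses. For independent coordinates,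
configurations agreeing off a finite set `F` have point masses in the ratio of their marginal
weights over `F`. The blocking weight of `b ∈ {0, 1}` at site `j` is `r ^ (j b) / (1 + r ^ j)`
with `r = p / q`, so translating `ζ` and `η_Z` by `k` multiplies the ratio `μ{ζ} / μ{η_Z}` by
`r ^ (k (#particles left of Z - #holes right of Z)) = 1`. Hence translation by `k` maps `μ` on
`Ω_Z` to `μ{η_{Z+k}} / μ{η_Z}` times `μ` on `Ω_{Z+k}`, and this constant cancels on conditioning.
It is finite and nonzero because `μ{η_Z} > 0`: by Borel–Cantelli almost every configuration
differs from `η_Z` at finitely many sites, and all these countably many configurations would be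
null if `η_Z` were.
-/

open MeasureTheory ProbabilityTheory

/-- `Ω_Z`: configurations with finitely many particles strictly left of `Z` and finitely
many holes at or right of `Z`, in equal number. A configuration `ζ : ℤ → Bool` has a
particle at `j` iff `ζ j = true`. -/
def OmegaZ (Z : ℤ) : Set (ℤ → Bool) :=
  {ζ | {j : ℤ | j < Z ∧ ζ j = true}.Finite ∧ {j : ℤ | Z ≤ j ∧ ζ j = false}.Finite ∧
    {j : ℤ | j < Z ∧ ζ j = true}.ncard = {j : ℤ | Z ≤ j ∧ ζ j = false}.ncard}

open Filter
open scoped Finset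

namespace ProbabilityTheory.iIndepFun

variable {ι β : Type*} [Countable ι] [MeasurableSpace β] [MeasurableSingletonClass β]
  {μ : Measure (ι → β)}

theorem measure_singleton_eq_prod_mul (hind : iIndepFun (fun i (ω : ι → β) => ω i) μ)
    (ζ : ι → β) (F : Finset ι) :
    μ {ζ} = (∏ j ∈ F, μ {ω | ω j = ζ j}) * μ {ω | ∀ j ∉ F, ω j = ζ j} := by
  let m : ι → MeasurableSpace (ι → β) := fun j => .comap (fun ω => ω j) inferInstance
  have hm : ∀ j, MeasurableSet[m j] {ω | ω j = ζ j} :=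
    fun j => ⟨{ζ j}, measurableSet_singleton _, rfl⟩
  have hmS : ∀ {S : Set ι}, ∀ j ∈ S, MeasurableSet[⨆ i ∈ S, m i] {ω | ω j = ζ j} :=
    fun j hj => le_iSup₂ (f := fun i _ => m i) j hj _ (hm j)
  have hsplit : ({ζ} : Set (ι → β)) =
      (⋂ j ∈ (F : Set ι), {ω | ω j = ζ j}) ∩ ⋂ j ∈ (F : Set ι)ᶜ, {ω | ω j = ζ j} := by
    ext ω
    simp only [Set.mem_singleton_iff, Set.mem_inter_iff, Set.mem_iInter, Set.mem_ofPred_eq,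
      Set.mem_compl_iff, Finset.mem_coe, funext_iff]
    exact ⟨fun h => ⟨fun j _ => h j, fun j _ => h j⟩, fun h j => (em (j ∈ F)).elim (h.1 j) (h.2 j)⟩
  have hrest : {ω | ∀ j ∉ F, ω j = ζ j} = ⋂ j ∈ (F : Set ι)ᶜ, {ω : ι → β | ω j = ζ j} := by
    ext ω
    simp
  have hindep := indep_iSup_of_disjoint (fun j => (measurable_pi_apply j).comap_le)
    hind.iIndep (disjoint_compl_right (a := (F : Set ι)))
  rw [hsplit, hrest, (Indep_iff _ _ μ).1 hindep _ _ (.biInter F.countable_toSet hmS)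
    (.biInter (Set.to_countable _) hmS), Finset.set_biInter_coe,
    hind.meas_biInter fun j _ => hm j]

theorem measure_singleton_mul_prod_eq (hind : iIndepFun (fun i (ω : ι → β) => ω i) μ)
    {ζ η : ι → β} {F : Finset ι} (h : ∀ j ∉ F, ζ j = η j) :
    μ {ζ} * ∏ j ∈ F, μ {ω | ω j = η j} = μ {η} * ∏ j ∈ F, μ {ω | ω j = ζ j} := by
  have hB : {ω : ι → β | ∀ j ∉ F, ω j = ζ j} = {ω | ∀ j ∉ F, ω j = η j} := by
    ext ω; exact forall₂_congr fun j hj => by rw [h j hj]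
  rw [hind.measure_singleton_eq_prod_mul ζ F, hind.measure_singleton_eq_prod_mul η F, hB]
  ring

end ProbabilityTheory.iIndepFun

theorem Set.countable_setOf_finite_ne {ι β : Type*} [Countable ι] [Countable β] (η : ι → β) :
    {ω : ι → β | {j | ω j ≠ η j}.Finite}.Countable := by
  classical
  have hsub : {ω : ι → β | {j | ω j ≠ η j}.Finite} ⊆ ⋃ F : Finset ι,
      Set.range fun g : F → β => fun j => if h : j ∈ F then g ⟨j, h⟩ else η j := by
    intro ω hω
    refine Set.mem_iUnion.2 ⟨hω.toFinset, fun j => ω j, funext fun j => ?_⟩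
    by_cases hj : j ∈ hω.toFinset <;> simp [eq_comm]
  exact (Set.countable_iUnion fun F => Set.countable_range _).mono hsub

theorem Set.Countable.measure_eq_tsum_singleton {α : Type*} [MeasurableSpace α]
    [MeasurableSingletonClass α] {μ : Measure α} {s : Set α} (hs : s.Countable) :
    μ s = ∑' x : s, μ {(x : α)} := by
  simpa using
    (tsum_measure_preimage_singleton hs (f := id) fun _ _ => measurableSet_singleton _).symm

namespace ProbabilityTheory.iIndepFun

variable {ι β : Type*} [Countable ι] [Countable β] [MeasurableSpace β] [MeasurableSingletonClass β]
  {μ : Measure (ι → β)} [NeZero μ]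

theorem measure_singleton_ne_zero (hind : iIndepFun (fun i (ω : ι → β) => ω i) μ) {η : ι → β}
    (hpos : ∀ j, μ {ω | ω j = η j} ≠ 0) (hsum : ∑' j, μ {ω | ω j ≠ η j} ≠ ⊤) :
    μ {η} ≠ 0 := by
  intro hη
  have hnull : ∀ ω ∈ {ω : ι → β | {j | ω j ≠ η j}.Finite}, μ {ω} = 0 := fun ω hω => by
    have hratio := hind.measure_singleton_mul_prod_eq (F := hω.toFinset) (ζ := ω) (η := η)
      (by simp)
    rw [hη, zero_mul, mul_eq_zero] at hratio
    exact hratio.resolve_right (Finset.prod_ne_zero_iff.2 fun j _ => hpos j)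
  have hD : μ {ω : ι → β | {j | ω j ≠ η j}.Finite} = 0 := by
    rw [← Set.biUnion_of_singleton {ω : ι → β | {j | ω j ≠ η j}.Finite},
      measure_biUnion_null_iff (Set.countable_setOf_finite_ne η)]
    exact hnull
  obtain ⟨ω, hfin, hnotMem⟩ :=
    ((ae_finite_setOfPred_mem hsum).and (measure_eq_zero_iff_ae_notMem.1 hD)).exists
  exact hnotMem hfin

end ProbabilityTheory.iIndepFun

namespace BlockingMeasure

def groundState (Z : ℤ) : ℤ → Bool := fun j => decide (Z ≤ j)

theorem setOf_ne_groundState (Z : ℤ) (ζ : ℤ → Bool) :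
    {j | ζ j ≠ groundState Z j} = {j | j < Z ∧ ζ j = true} ∪ {j | Z ≤ j ∧ ζ j = false} := by
  ext j
  by_cases h : Z ≤ j <;> simp [groundState, h]
  omega

theorem finite_setOf_ne_groundState {Z : ℤ} {ζ : ℤ → Bool} (hζ : ζ ∈ OmegaZ Z) :
    {j | ζ j ≠ groundState Z j}.Finite := by
  rw [setOf_ne_groundState]
  exact hζ.1.union hζ.2.1

theorem countable_OmegaZ (Z : ℤ) : (OmegaZ Z).Countable :=
  (Set.countable_setOf_finite_ne (groundState Z)).mono fun _ => finite_setOf_ne_groundState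

theorem card_filter_eq_card_filter_groundState {Z : ℤ} {ζ : ℤ → Bool} (hζ : ζ ∈ OmegaZ Z) :
    #{j ∈ (finite_setOf_ne_groundState hζ).toFinset | ζ j = true} =
      #{j ∈ (finite_setOf_ne_groundState hζ).toFinset | groundState Z j = true} := by
  rw [← Set.ncard_coe_finset, ← Set.ncard_coe_finset]
  convert hζ.2.2 using 2 <;> ext j <;> by_cases h : Z ≤ j <;> simp [groundState, h]
  all_goals omega

def shift (k : ℤ) : (ℤ → Bool) ≃ (ℤ → Bool) where
  toFun ζ j := ζ (j - k)
  invFun ζ j := ζ (j + k)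
  left_inv ζ := funext fun j => by simp
  right_inv ζ := funext fun j => by simp

@[simp]
theorem shift_apply (k : ℤ) (ζ : ℤ → Bool) (j : ℤ) : shift k ζ j = ζ (j - k) := rfl

theorem shift_groundState (k Z : ℤ) : shift k (groundState Z) = groundState (Z + k) := by
  ext j
  simp only [shift_apply, groundState, decide_eq_decide]
  omega

theorem shift_mem_OmegaZ_iff {k Z : ℤ} {ζ : ℤ → Bool} :
    shift k ζ ∈ OmegaZ (Z + k) ↔ ζ ∈ OmegaZ Z := by
  have hP : {j | j < Z + k ∧ shift k ζ j = true} =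
      Equiv.addRight k '' {j | j < Z ∧ ζ j = true} := by
    rw [Equiv.image_eq_preimage_symm]; ext j; simp [sub_eq_add_neg]
  have hH : {j | Z + k ≤ j ∧ shift k ζ j = false} =
      Equiv.addRight k '' {j | Z ≤ j ∧ ζ j = false} := by
    rw [Equiv.image_eq_preimage_symm]; ext j; simp [sub_eq_add_neg]
  simp only [OmegaZ, Set.mem_ofPred_eq, hP, hH, Set.finite_image_iff (Equiv.injective _).injOn,
    Set.ncard_image_of_injective _ (Equiv.injective _)]

theorem image_shift_OmegaZ (k Z : ℤ) : shift k '' OmegaZ Z = OmegaZ (Z + k) := by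
  ext ζ
  rw [Equiv.image_eq_preimage_symm, Set.mem_preimage, ← shift_mem_OmegaZ_iff (k := k),
    Equiv.apply_symm_apply]

theorem image_shift_setOf_apply (k i : ℤ) :
    shift k '' {ζ | ζ i = true} = {ζ | ζ (i + k) = true} := by
  rw [Equiv.image_eq_preimage_symm]
  rfl

noncomputable def blockingProb (r : ℝ) (j : ℤ) (b : Bool) : ℝ :=
  (if b then r ^ j else 1) / (1 + r ^ j)

variable {r : ℝ}

theorem blockingProb_pos (hr : 0 < r) (j : ℤ) (b : Bool) : 0 < blockingProb r j b := by
  unfold blockingProb; split_ifs <;> positivity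

theorem blockingProb_add (hr : 0 < r) (j k : ℤ) (b : Bool) :
    blockingProb r (j + k) b =
      (1 + r ^ j) / (1 + r ^ (j + k)) * (if b then r ^ k else 1) * blockingProb r j b := by
  have hj := zpow_pos hr j
  have hjk := zpow_pos hr (j + k)
  cases b <;> simp only [blockingProb, Bool.false_eq_true, if_false, if_true, zpow_add₀ hr.ne'] <;>
    field_simp

theorem prod_blockingProb_add (hr : 0 < r) (k : ℤ) (F : Finset ℤ) (x : ℤ → Bool) :
    ∏ j ∈ F, blockingProb r (j + k) (x j) =
      (∏ j ∈ F, (1 + r ^ j) / (1 + r ^ (j + k))) * (r ^ k) ^ #{j ∈ F | x j = true} *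
        ∏ j ∈ F, blockingProb r j (x j) := by
  simp only [blockingProb_add hr, Finset.prod_mul_distrib, Finset.prod_ite, Finset.prod_const,
    one_pow, mul_one]

theorem summable_blockingProb_not_groundState (hr : 1 < r) (Z : ℤ) :
    Summable fun j => blockingProb r j (!groundState Z j) := by
  have hr0 : 0 < r := one_pos.trans hr
  have hgeom : Summable fun j : ℤ => r ^ (-|j|) := by
    apply Summable.of_nat_of_neg <;>
      simpa [zpow_neg, zpow_natCast, inv_pow] using
        summable_geometric_of_lt_one (inv_nonneg.2 hr0.le) (inv_lt_one_of_one_lt₀ hr)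
  refine hgeom.of_norm_bounded_eventually ?_
  rw [Int.cofinite_eq, eventually_sup, eventually_atBot, eventually_atTop]
  refine ⟨⟨min Z 0 - 1, fun j hj => ?_⟩, ⟨max Z 0, fun j hj => ?_⟩⟩
  · have hjZ : j < Z := by omega
    rw [Real.norm_of_nonneg (blockingProb_pos hr0 j _).le, abs_of_neg (by omega : j < 0), neg_neg]
    simp only [blockingProb, groundState, hjZ.not_ge, decide_false, Bool.not_false, if_true]
    exact div_le_self (zpow_pos hr0 j).le (by linarith [zpow_pos hr0 j])
  · have hjZ : Z ≤ j := by omega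
    rw [Real.norm_of_nonneg (blockingProb_pos hr0 j _).le, abs_of_nonneg (by omega : 0 ≤ j)]
    simp only [blockingProb, groundState, hjZ, decide_true, Bool.not_true, Bool.false_eq_true,
      if_false, zpow_neg]
    rw [one_div]
    exact inv_anti₀ (zpow_pos hr0 j) (by linarith)

variable {μ : Measure (ℤ → Bool)}

theorem measure_eval_eq_ofReal_blockingProb [IsProbabilityMeasure μ] (hr : 0 < r)
    (hmarg : ∀ j : ℤ, μ {ω | ω j = true} = ENNReal.ofReal (r ^ j / (1 + r ^ j)))
    (j : ℤ) (b : Bool) : μ {ω | ω j = b} = ENNReal.ofReal (blockingProb r j b) := by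
  have hj := zpow_pos hr j
  cases b
  · have hcompl : {ω : ℤ → Bool | ω j = false} = {ω | ω j = true}ᶜ := by ext; simp
    rw [hcompl,
      prob_compl_eq_one_sub (measurableSet_eq_fun (measurable_pi_apply j) measurable_const), hmarg,
      ← ENNReal.ofReal_one, ← ENNReal.ofReal_sub _ (by positivity)]
    congr 1
    simp only [blockingProb, Bool.false_eq_true, if_false]
    field_simp
    ring
  · simp [blockingProb, hmarg]

theorem measureReal_singleton_mul_prod_blockingProb
    (hind : iIndepFun (fun i (ω : ℤ → Bool) => ω i) μ)
    (hm : ∀ j b, μ {ω | ω j = b} = ENNReal.ofReal (blockingProb r j b)) (hr : 0 < r)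
    {ζ η : ℤ → Bool} {F : Finset ℤ} (h : ∀ j ∉ F, ζ j = η j) :
    μ.real {ζ} * ∏ j ∈ F, blockingProb r j (η j) =
      μ.real {η} * ∏ j ∈ F, blockingProb r j (ζ j) := by
  simpa [hm, measureReal_def, ENNReal.toReal_prod, (blockingProb_pos hr _ _).le] using
    congrArg ENNReal.toReal (hind.measure_singleton_mul_prod_eq h)

theorem measure_singleton_shift_mul [IsFiniteMeasure μ]
    (hind : iIndepFun (fun i (ω : ℤ → Bool) => ω i) μ)
    (hm : ∀ j b, μ {ω | ω j = b} = ENNReal.ofReal (blockingProb r j b)) (hr : 0 < r)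
    (k : ℤ) {Z : ℤ} {ζ : ℤ → Bool} (hζ : ζ ∈ OmegaZ Z) :
    μ {shift k ζ} * μ {groundState Z} = μ {ζ} * μ {groundState (Z + k)} := by
  classical
  set F := (finite_setOf_ne_groundState hζ).toFinset
  have hF : ∀ j ∉ F, ζ j = groundState Z j := fun j hj => by simpa [F] using hj
  have hFk : ∀ j ∉ F.map (Equiv.addRight k).toEmbedding,
      shift k ζ j = shift k (groundState Z) j := fun j hj =>
    hF (j - k) (by simpa [Finset.mem_map_equiv, sub_eq_add_neg] using hj)
  have hratio := measureReal_singleton_mul_prod_blockingProb hind hm hr hF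
  have hratio_shift := measureReal_singleton_mul_prod_blockingProb hind hm hr hFk
  simp only [Finset.prod_map, Equiv.coe_toEmbedding, Equiv.coe_addRight, shift_apply,
    add_sub_cancel_right] at hratio_shift
  -- as many particles left of `Z` as holes right of `Z`: both sides acquire the same factor `G`
  rw [prod_blockingProb_add hr, prod_blockingProb_add hr,
    card_filter_eq_card_filter_groundState hζ] at hratio_shift
  set G := (∏ j ∈ F, (1 + r ^ j) / (1 + r ^ (j + k))) *
    (r ^ k) ^ #{j ∈ F | groundState Z j = true}
  have hG : 0 < G * ∏ j ∈ F, blockingProb r j (groundState Z j) :=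
    mul_pos (mul_pos (Finset.prod_pos fun j _ => by positivity) (by positivity))
      (Finset.prod_pos fun j _ => blockingProb_pos hr _ _)
  have key : μ.real {shift k ζ} * μ.real {groundState Z} =
      μ.real {ζ} * μ.real {shift k (groundState Z)} := by
    refine mul_right_cancel₀ hG.ne' ?_
    linear_combination μ.real {groundState Z} * hratio_shift -
      μ.real {shift k (groundState Z)} * G * hratio
  rw [shift_groundState] at key
  rwa [← ENNReal.toReal_eq_toReal_iff' (by finiteness) (by finiteness), ENNReal.toReal_mul,
    ENNReal.toReal_mul]

theorem measure_groundState_ne_zero [NeZero μ]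
    (hind : iIndepFun (fun i (ω : ℤ → Bool) => ω i) μ)
    (hm : ∀ j b, μ {ω | ω j = b} = ENNReal.ofReal (blockingProb r j b)) (hr : 1 < r) (Z : ℤ) :
    μ {groundState Z} ≠ 0 := by
  have hr0 : 0 < r := one_pos.trans hr
  have hflip : ∀ j, μ {ω | ω j ≠ groundState Z j} =
      ENNReal.ofReal (blockingProb r j (!groundState Z j)) := fun j => by
    simp only [← hm, Bool.eq_not_iff]
  refine hind.measure_singleton_ne_zero (fun j => by simp [hm, blockingProb_pos hr0]) ?_
  rw [tsum_congr hflip, ← ENNReal.ofReal_tsum_of_nonneg (fun j => (blockingProb_pos hr0 _ _).le)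
    (summable_blockingProb_not_groundState hr Z)]
  exact ENNReal.ofReal_ne_top

theorem measure_image_shift [IsProbabilityMeasure μ]
    (hind : iIndepFun (fun i (ω : ℤ → Bool) => ω i) μ)
    (hm : ∀ j b, μ {ω | ω j = b} = ENNReal.ofReal (blockingProb r j b)) (hr : 1 < r)
    (k : ℤ) {Z : ℤ} {S : Set (ℤ → Bool)} (hS : S ⊆ OmegaZ Z) :
    μ (shift k '' S) = μ {groundState (Z + k)} / μ {groundState Z} * μ S := by
  have hS' : S.Countable := (countable_OmegaZ Z).mono hS
  have hpt : ∀ ζ ∈ S, μ {shift k ζ} = μ {groundState (Z + k)} / μ {groundState Z} * μ {ζ} :=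
    fun ζ hζ => by
      rw [mul_comm, ← mul_div_assoc, ENNReal.eq_div_iff
        (measure_groundState_ne_zero hind hm hr Z) (measure_ne_top _ _), mul_comm,
        measure_singleton_shift_mul hind hm (one_pos.trans hr) k (hS hζ)]
  rw [hS'.measure_eq_tsum_singleton, (hS'.image _).measure_eq_tsum_singleton,
    tsum_image (fun ζ => μ {ζ}) (shift k).injective.injOn, ← ENNReal.tsum_mul_left]
  exact tsum_congr fun ζ => hpt ζ ζ.2

end BlockingMeasure

open BlockingMeasure in
/-- Translation covariance of the conditioned blocking measures:
`μ_Z(i) = μ_{Z+k}(i+k)`. -/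
theorem stmt_7 (p : ℝ) (hp : 1 / 2 < p) (hp1 : p < 1)
    (μ : Measure (ℤ → Bool)) [IsProbabilityMeasure μ]
    (hind : iIndepFun (fun i (ζ : ℤ → Bool) => ζ i) μ)
    (hmarg : ∀ i : ℤ, μ {ζ | ζ i = true} =
      ENNReal.ofReal ((p / (1 - p)) ^ i / (1 + (p / (1 - p)) ^ i))) :
    ∀ Z k i : ℤ,
      μ[|OmegaZ Z] {ζ | ζ i = true} = μ[|OmegaZ (Z + k)] {ζ | ζ (i + k) = true} := by
  intro Z k i
  have hr : 1 < p / (1 - p) := by rw [lt_div_iff₀ (by linarith)]; linarith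
  have hm := measure_eval_eq_ofReal_blockingProb (one_pos.trans hr) hmarg
  have hc : μ {groundState (Z + k)} / μ {groundState Z} ≠ 0 :=
    ENNReal.div_ne_zero.2 ⟨measure_groundState_ne_zero hind hm hr _, measure_ne_top _ _⟩
  have hc' : μ {groundState (Z + k)} / μ {groundState Z} ≠ ⊤ :=
    ENNReal.div_ne_top (measure_ne_top _ _) (measure_groundState_ne_zero hind hm hr _)
  rw [cond_apply (countable_OmegaZ Z).measurableSet,
    cond_apply (countable_OmegaZ (Z + k)).measurableSet, ← image_shift_OmegaZ,
    ← image_shift_setOf_apply, ← Set.image_inter (shift k).injective,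
    measure_image_shift hind hm hr k subset_rfl,
    measure_image_shift hind hm hr k Set.inter_subset_left,
    ENNReal.mul_inv (.inl hc) (.inl hc'), mul_mul_mul_comm, ENNReal.inv_mul_cancel hc hc', one_mul]
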